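/- In the q-Weyl algebra over R = ℚ[ε]/(ε²) with q = 1 + ε and relation FE = qEF + 1, for all naturals a, b: F^b E^a = ∑_j ([a]![b]! / ([a-j]![j]![b-j]!)) · E^{a-j}(1 + jε·EF) F^{b-j}, where [k] = k(1 + ε(k-1)/2) and [m]! = m!(1 + ε·m(m-1)/4). -/

import Mathlib

open DualNumber

/-- The defining relation of the q-Weyl algebra over `R = ℚ[ε]/(ε²)` with
`q = 1 + ε`: `F * E = q E F + 1`, where `E` is the image of `true` and `F` the
image of `false`. -/
inductive QWeylRel : FreeAlgebra (DualNumber ℚ) Bool → FreeAlgebra (DualNumber ℚ) Bool → Prop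
  | rel : QWeylRel
      (FreeAlgebra.ι (DualNumber ℚ) false * FreeAlgebra.ι (DualNumber ℚ) true)
      (((1 : DualNumber ℚ) + ε) •
        (FreeAlgebra.ι (DualNumber ℚ) true * FreeAlgebra.ι (DualNumber ℚ) false) + 1)

/-- The q-Weyl algebra over `ℚ[ε]/(ε²)`, `q = 1 + ε`. -/
abbrev QWeyl : Type := RingQuot QWeylRel

noncomputable def QWeyl.E : QWeyl :=
  RingQuot.mkAlgHom (DualNumber ℚ) QWeylRel (FreeAlgebra.ι (DualNumber ℚ) true)
noncomputable def QWeyl.F : QWeyl :=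
  RingQuot.mkAlgHom (DualNumber ℚ) QWeylRel (FreeAlgebra.ι (DualNumber ℚ) false)

/-- The q-factorial `[m]! = m!(1 + ε m(m-1)/4)` in `ℚ[ε]/(ε²)`. -/
noncomputable def qFact (m : ℕ) : DualNumber ℚ :=
  (m.factorial : DualNumber ℚ) * (1 + (((m : ℚ) * ((m : ℚ) - 1)) / 4) • ε)

/-!
Over any commutative semiring, a relation `f e = q e f + 1` gives
`f e ^ n = q ^ n e ^ n f + [n] e ^ (n - 1)` with `[n] = 1 + q + ⋯ + q ^ (n - 1)`, and induction
on `b` with the q-Pascal rule yields the q-normal ordering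
`f ^ b e ^ a = ∑ j, q ^ ((a - j) (b - j)) ([a]! / [a - j]!) [b choose j] e ^ (a - j) f ^ (b - j)`.
For `q = 1 + ε` one has `[k] = k (1 + ε (k - 1) / 2)`, so `qFact` is the q-factorial and the
coefficient is `[a]! [b]! / ([a - j]! [j]! [b - j]!)`. Since `ε² = 0`, the factor
`q ^ ((a - j) (b - j))` is `1 + (a - j) (b - j) ε`, and the `ε`-term of index `j` only sees the
classical count `a! / (a - j)! · C(b, j)`. As `j + 1` times the count at `j + 1` is
`(a - j) (b - j)` times the count at `j`, that `ε`-term is the `(j + 1) ε E F` correction of the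
term of index `j + 1`.
-/

open Finset

section QAnalog

variable {R S : Type*} [CommSemiring R] [CommSemiring S] (q : R)

def qNum (n : ℕ) : R := ∑ i ∈ range n, q ^ i

def qFactorial (n : ℕ) : R := ∏ i ∈ range n, qNum q (i + 1)

def qDescFactorial (a j : ℕ) : R := ∏ i ∈ range j, qNum q (a - i)

def qChoose : ℕ → ℕ → R
  | _, 0 => 1
  | 0, _ + 1 => 0
  | n + 1, k + 1 => qChoose n (k + 1) + q ^ (n - k) * qChoose n k

@[simp] theorem qNum_zero : qNum q 0 = 0 := rfl

theorem qNum_add (m n : ℕ) : qNum q (m + n) = qNum q m + q ^ m * qNum q n := by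
  simp only [qNum, sum_range_add, pow_add, mul_sum]

theorem qNum_succ (n : ℕ) : qNum q (n + 1) = qNum q n + q ^ n := by
  rw [qNum, sum_range_succ, qNum]

@[simp] theorem qNum_one (n : ℕ) : qNum (1 : R) n = n := one_geom_sum n

theorem map_qNum (φ : R →+* S) (n : ℕ) : φ (qNum q n) = qNum (φ q) n := φ.map_geom_sum q n

@[simp] theorem qFactorial_zero : qFactorial q 0 = 1 := rfl

theorem qFactorial_succ (n : ℕ) : qFactorial q (n + 1) = qNum q (n + 1) * qFactorial q n := by
  rw [qFactorial, prod_range_succ, mul_comm, qFactorial]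

@[simp] theorem qDescFactorial_zero (a : ℕ) : qDescFactorial q a 0 = 1 := rfl

theorem qDescFactorial_succ (a j : ℕ) :
    qDescFactorial q a (j + 1) = qNum q (a - j) * qDescFactorial q a j := by
  rw [qDescFactorial, prod_range_succ, mul_comm, qDescFactorial]

theorem qDescFactorial_eq_zero_of_lt {a j : ℕ} (h : a < j) : qDescFactorial q a j = 0 :=
  prod_eq_zero (mem_range.2 h) (by simp)

theorem qDescFactorial_mul_qFactorial {a j : ℕ} (h : j ≤ a) :
    qDescFactorial q a j * qFactorial q (a - j) = qFactorial q a := by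
  induction j with
  | zero => simp
  | succ j ih =>
    obtain ⟨k, rfl⟩ := Nat.exists_eq_add_of_lt h
    rw [← ih (by omega), qDescFactorial_succ, show j + k + 1 - j = k + 1 by omega,
      qFactorial_succ, show j + k + 1 - (j + 1) = k by omega]
    ring

theorem map_qDescFactorial (φ : R →+* S) (a j : ℕ) :
    φ (qDescFactorial q a j) = qDescFactorial (φ q) a j := by
  simp [qDescFactorial, map_prod, map_qNum]

@[simp] theorem qDescFactorial_one (a j : ℕ) :
    qDescFactorial (1 : R) a j = a.descFactorial j := by
  induction j with
  | zero => simp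
  | succ j ih => rw [qDescFactorial_succ, ih, Nat.descFactorial_succ]; simp

@[simp] theorem qChoose_zero_right (n : ℕ) : qChoose q n 0 = 1 := by cases n <;> rfl

theorem qChoose_succ_succ (n k : ℕ) :
    qChoose q (n + 1) (k + 1) = qChoose q n (k + 1) + q ^ (n - k) * qChoose q n k := rfl

theorem qChoose_eq_zero_of_lt {n k : ℕ} (h : n < k) : qChoose q n k = 0 := by
  induction n generalizing k with
  | zero => obtain ⟨k, rfl⟩ := Nat.exists_eq_add_of_lt h; rfl
  | succ n ih =>
    obtain ⟨k, rfl⟩ := Nat.exists_eq_add_of_lt (Nat.zero_lt_of_lt h)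
    rw [qChoose_succ_succ, ih (by omega), ih (by omega), mul_zero, add_zero]

theorem map_qChoose (φ : R →+* S) (n k : ℕ) : φ (qChoose q n k) = qChoose (φ q) n k := by
  induction n generalizing k with
  | zero => cases k <;> simp [qChoose]
  | succ n ih => cases k <;> simp [qChoose_succ_succ, ih]

@[simp] theorem qChoose_one (n k : ℕ) : qChoose (1 : R) n k = n.choose k := by
  induction n generalizing k with
  | zero => cases k <;> simp [qChoose]
  | succ n ih => cases k <;> simp [qChoose_succ_succ, ih, Nat.choose_succ_succ', add_comm]

theorem qChoose_mul_qFactorial_mul_qFactorial {n k : ℕ} (h : k ≤ n) :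
    qChoose q n k * qFactorial q k * qFactorial q (n - k) = qFactorial q n := by
  induction n generalizing k with
  | zero => simp [Nat.le_zero.1 h]
  | succ n ih =>
    cases k with
    | zero => simp
    | succ k =>
      have hleft : qChoose q n (k + 1) * qFactorial q (k + 1) * qFactorial q (n - k)
          = qNum q (n - k) * qFactorial q n := by
        rcases Nat.lt_or_ge k n with hk | hk
        · rw [← ih hk, show n - k = n - (k + 1) + 1 by omega, qFactorial_succ q (n - (k + 1))]
          ring
        · rw [qChoose_eq_zero_of_lt q (by omega), show n - k = 0 by omega]; simp
      have hright : qChoose q n k * qFactorial q (k + 1) * qFactorial q (n - k)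
          = qNum q (k + 1) * qFactorial q n := by
        rw [← ih (k := k) (by omega), qFactorial_succ]; ring
      rw [qChoose_succ_succ, Nat.add_sub_add_right, qFactorial_succ q n,
        show n + 1 = n - k + (k + 1) by omega, qNum_add, add_mul, add_mul, add_mul, hleft,
        mul_assoc (q ^ _), mul_assoc (q ^ _), hright]
      ring

/-- `[a]! / [a - j]! · [b choose j]`, a q-analogue of the number `a! / (a - j)! · C(b, j)` of
ways to pair `j` of `a` letters `e` with `j` of `b` letters `f`. -/
def qMatchings (a b j : ℕ) : R := qDescFactorial q a j * qChoose q b j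

theorem qMatchings_eq_zero_of_min_lt {a b j : ℕ} (h : min a b < j) : qMatchings q a b j = 0 := by
  rcases min_lt_iff.1 h with h | h
  · rw [qMatchings, qDescFactorial_eq_zero_of_lt q h, zero_mul]
  · rw [qMatchings, qChoose_eq_zero_of_lt q h, mul_zero]

theorem map_qMatchings (φ : R →+* S) (a b j : ℕ) :
    φ (qMatchings q a b j) = qMatchings (φ q) a b j := by
  rw [qMatchings, map_mul, map_qDescFactorial, map_qChoose, qMatchings]

@[simp] theorem qMatchings_one (a b j : ℕ) :
    qMatchings (1 : R) a b j = a.descFactorial j * b.choose j := by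
  simp [qMatchings]

theorem qFactorial_mul_qFactorial_mul_inverse {a b j : ℕ} (ha : j ≤ a) (hb : j ≤ b)
    (hu : IsUnit (qFactorial q (a - j) * qFactorial q j * qFactorial q (b - j))) :
    qFactorial q a * qFactorial q b *
        Ring.inverse (qFactorial q (a - j) * qFactorial q j * qFactorial q (b - j)) =
      qMatchings q a b j := by
  rw [← qDescFactorial_mul_qFactorial q ha, ← qChoose_mul_qFactorial_mul_qFactorial q hb,
    qMatchings]
  calc _ = qDescFactorial q a j * qChoose q b j *
        ((qFactorial q (a - j) * qFactorial q j * qFactorial q (b - j)) *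
          Ring.inverse (qFactorial q (a - j) * qFactorial q j * qFactorial q (b - j))) := by ring
    _ = _ := by rw [Ring.mul_inverse_cancel _ hu, mul_one]

end QAnalog

section NormalOrder

variable {R A : Type*} [CommSemiring R] [Semiring A] [Algebra R A] {q : R} {e f : A}

theorem mul_pow_succ_of_mul_eq (h : f * e = q • (e * f) + 1) (n : ℕ) :
    f * e ^ (n + 1) = q ^ (n + 1) • (e ^ (n + 1) * f) + qNum q (n + 1) • e ^ n := by
  induction n with
  | zero => simp [h, qNum]
  | succ n ih =>
    calc f * e ^ (n + 2) = (f * e ^ (n + 1)) * e := by rw [mul_assoc, ← pow_succ]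
      _ = q ^ (n + 1) • (e ^ (n + 1) * (f * e)) + qNum q (n + 1) • e ^ (n + 1) := by
        rw [ih, add_mul, smul_mul_assoc, smul_mul_assoc, mul_assoc, ← pow_succ]
      _ = _ := by
        rw [h, mul_add, mul_one, mul_smul_comm, ← mul_assoc, ← pow_succ, smul_add, smul_smul,
          ← pow_succ, qNum_succ q (n + 1), add_smul]
        abel

theorem mul_pow_mul_pow_of_mul_eq (h : f * e = q • (e * f) + 1) (n m : ℕ) :
    f * (e ^ n * f ^ m) =
      q ^ n • (e ^ n * f ^ (m + 1)) + qNum q n • (e ^ (n - 1) * f ^ m) := by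
  cases n with
  | zero => simp [pow_succ']
  | succ n =>
    rw [← mul_assoc, mul_pow_succ_of_mul_eq h, add_mul, smul_mul_assoc, smul_mul_assoc,
      mul_assoc, ← pow_succ', Nat.add_sub_cancel]

theorem pow_mul_one_add_mul_mul_pow (c : R) (n m : ℕ) :
    e ^ n * (1 + algebraMap R A c * (e * f)) * f ^ m =
      e ^ n * f ^ m + c • (e ^ (n + 1) * f ^ (m + 1)) := by
  rw [← Algebra.smul_def, mul_add, mul_one, add_mul, mul_smul_comm, smul_mul_assoc, ← mul_assoc,
    ← pow_succ, mul_assoc, ← pow_succ']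

variable (q) in
def normalOrderCoeff (a b j : ℕ) : R :=
  q ^ ((a - j) * (b - j)) * qMatchings q a b j

theorem normalOrderCoeff_eq_zero_of_lt {a b j : ℕ} (h : b < j) :
    normalOrderCoeff q a b j = 0 := by
  rw [normalOrderCoeff, qMatchings_eq_zero_of_min_lt q (by omega), mul_zero]

theorem normalOrderCoeff_succ_zero (a b : ℕ) :
    normalOrderCoeff q a (b + 1) 0 = q ^ a * normalOrderCoeff q a b 0 := by
  simp [normalOrderCoeff, qMatchings, Nat.mul_succ, pow_add, mul_comm]

theorem normalOrderCoeff_succ_succ (a b j : ℕ) :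
    normalOrderCoeff q a (b + 1) (j + 1) =
      q ^ (a - (j + 1)) * normalOrderCoeff q a b (j + 1) +
        qNum q (a - j) * normalOrderCoeff q a b j := by
  rcases Nat.lt_or_ge j a with hja | hja
  · obtain ⟨k, rfl⟩ := Nat.exists_eq_add_of_lt hja
    rcases Nat.lt_or_ge j b with hjb | hjb
    · obtain ⟨l, rfl⟩ := Nat.exists_eq_add_of_lt hjb
      simp only [normalOrderCoeff, qMatchings, qChoose_succ_succ, qDescFactorial_succ,
        show j + k + 1 - (j + 1) = k by omega, show j + k + 1 - j = k + 1 by omega,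
        show j + l + 1 + 1 - (j + 1) = l + 1 by omega, show j + l + 1 - (j + 1) = l by omega,
        show j + l + 1 - j = l + 1 by omega]
      ring
    · simp only [normalOrderCoeff, qMatchings, qChoose_succ_succ, qDescFactorial_succ,
        qChoose_eq_zero_of_lt q (show b < j + 1 by omega),
        show j + k + 1 - (j + 1) = k by omega, show j + k + 1 - j = k + 1 by omega,
        show b + 1 - (j + 1) = 0 by omega, show b - j = 0 by omega]
      ring
  · simp [normalOrderCoeff, qMatchings, qDescFactorial_succ, show a - j = 0 by omega]

theorem pow_mul_pow_eq_sum_normalOrderCoeff (h : f * e = q • (e * f) + 1) (a b : ℕ) :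
    f ^ b * e ^ a =
      ∑ j ∈ range (b + 1), normalOrderCoeff q a b j • (e ^ (a - j) * f ^ (b - j)) := by
  induction b with
  | zero => simp [normalOrderCoeff, qMatchings]
  | succ b ih =>
    have hF : f ^ (b + 1) * e ^ a =
        ∑ j ∈ range (b + 1),
            (q ^ (a - j) * normalOrderCoeff q a b j) • (e ^ (a - j) * f ^ (b + 1 - j)) +
          ∑ j ∈ range (b + 1), (qNum q (a - j) * normalOrderCoeff q a b j) •
            (e ^ (a - (j + 1)) * f ^ (b + 1 - (j + 1))) := by
      rw [pow_succ', mul_assoc, ih, mul_sum, ← sum_add_distrib]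
      refine sum_congr rfl fun j hj ↦ ?_
      rw [mul_smul_comm, mul_pow_mul_pow_of_mul_eq h, smul_add, smul_smul, smul_smul,
        mul_comm (normalOrderCoeff q a b j), mul_comm (normalOrderCoeff q a b j),
        Nat.sub_sub, Nat.add_sub_add_right, Nat.sub_add_comm (by simpa [Nat.lt_succ_iff] using hj)]
    have hhead := sum_range_succ' (fun j ↦ (q ^ (a - j) * normalOrderCoeff q a b j) •
      (e ^ (a - j) * f ^ (b + 1 - j))) (b + 1)
    rw [sum_range_succ, normalOrderCoeff_eq_zero_of_lt (Nat.lt_succ_self b), mul_zero, zero_smul,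
      add_zero] at hhead
    rw [hF, hhead, sum_range_succ' _ (b + 1), normalOrderCoeff_succ_zero, add_right_comm,
      ← sum_add_distrib]
    simp only [normalOrderCoeff_succ_succ, add_smul, Nat.sub_zero]

end NormalOrder

section DualNumber

open TrivSqZeroExt

variable {R : Type*} [CommSemiring R]

theorem one_add_eps_pow (n : ℕ) : (1 + ε : R[ε]) ^ n = 1 + (n : R[ε]) * ε := by
  induction n with
  | zero => simp
  | succ n ih =>
    calc (1 + ε : R[ε]) ^ (n + 1) = 1 + ((n : R[ε]) + 1) * ε + (n : R[ε]) * (ε * ε) := by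
          rw [pow_succ, ih]; ring
      _ = 1 + ((n + 1 : ℕ) : R[ε]) * ε := by rw [eps_mul_eps]; push_cast; ring

theorem eps_mul_eq_eps_mul {x y : R[ε]} (h : x.fst = y.fst) : ε * x = ε * y := by
  ext <;> simp [h]

theorem fst_qMatchings_one_add_eps (a b j : ℕ) :
    (qMatchings (1 + ε : R[ε]) a b j).fst = a.descFactorial j * b.choose j := by
  have h := map_qMatchings (1 + ε) (fstHom R R R).toRingHom a b j
  simpa only [AlgHom.toRingHom_eq_coe, RingHom.coe_coe, fstHom_apply, fst_add, fst_one,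
    fst_eps, add_zero, qMatchings_one] using h

theorem eps_mul_succ_mul_qMatchings_one_add_eps (a b j : ℕ) :
    ε * (((j + 1 : ℕ) : R[ε]) * qMatchings (1 + ε) a b (j + 1)) =
      ε * ((((a - j) * (b - j) : ℕ) : R[ε]) * qMatchings (1 + ε) a b j) := by
  refine eps_mul_eq_eps_mul ?_
  simp only [fst_mul, fst_natCast, fst_qMatchings_one_add_eps]
  have h : (j + 1) * (a.descFactorial (j + 1) * b.choose (j + 1)) =
      (a - j) * (b - j) * (a.descFactorial j * b.choose j) :=
    calc _ = (a - j) * a.descFactorial j * (b.choose (j + 1) * (j + 1)) := by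
          rw [Nat.descFactorial_succ]; ring
      _ = _ := by rw [Nat.choose_succ_right_eq]; ring
  rw [← Nat.cast_mul, ← Nat.cast_mul, h]
  push_cast
  ring

theorem normalOrderCoeff_one_add_eps (a b j : ℕ) :
    normalOrderCoeff (1 + ε : R[ε]) a b j =
      qMatchings (1 + ε) a b j +
        ε * ((((a - j) * (b - j) : ℕ) : R[ε]) * qMatchings (1 + ε) a b j) := by
  rw [normalOrderCoeff, one_add_eps_pow]; ring

variable {M : Type*} [AddCommMonoid M] [Module R[ε] M]

theorem sum_normalOrderCoeff_one_add_eps (x : ℕ → ℕ → M) (a b : ℕ) :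
    ∑ j ∈ range (b + 1), normalOrderCoeff (1 + ε : R[ε]) a b j • x (a - j) (b - j) =
      ∑ j ∈ range (min a b + 1), qMatchings (1 + ε : R[ε]) a b j •
        (x (a - j) (b - j) + ((j : R[ε]) * ε) • x (a - j + 1) (b - j + 1)) := by
  have htrunc :
      ∑ j ∈ range (b + 1), normalOrderCoeff (1 + ε : R[ε]) a b j • x (a - j) (b - j) =
      ∑ j ∈ range (min a b + 1), normalOrderCoeff (1 + ε : R[ε]) a b j • x (a - j) (b - j) := by
    refine (sum_subset (range_subset_range.2 (by omega)) fun j _ hj ↦ ?_).symm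
    simp only [mem_range, not_lt] at hj
    simp [normalOrderCoeff, qMatchings_eq_zero_of_min_lt _ (show min a b < j by omega)]
  have hshift : ∑ j ∈ range (min a b + 1),
        (ε * ((((a - j) * (b - j) : ℕ) : R[ε]) * qMatchings (1 + ε) a b j)) •
          x (a - j) (b - j) =
      ∑ j ∈ range (min a b + 1),
        (qMatchings (1 + ε : R[ε]) a b j * ((j : R[ε]) * ε)) • x (a - j + 1) (b - j + 1) := by
    have hmin : (a - min a b) * (b - min a b) = 0 := by
      rcases le_total a b with h | h <;> simp [h]
    rw [sum_range_succ, sum_range_succ', hmin]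
    simp only [Nat.cast_zero, zero_mul, mul_zero, zero_smul, add_zero]
    refine sum_congr rfl fun j hj ↦ ?_
    have hj : j < min a b := mem_range.1 hj
    rw [show a - (j + 1) + 1 = a - j by omega, show b - (j + 1) + 1 = b - j by omega]
    congr 1
    calc _ = ε * ((((a - j) * (b - j) : ℕ) : R[ε]) * qMatchings (1 + ε) a b j) := by ring
      _ = ε * (((j + 1 : ℕ) : R[ε]) * qMatchings (1 + ε) a b (j + 1)) :=
        (eps_mul_succ_mul_qMatchings_one_add_eps a b j).symm
      _ = _ := by ring
  rw [htrunc]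
  simp only [normalOrderCoeff_one_add_eps, add_smul, smul_add, sum_add_distrib, smul_smul, hshift]

end DualNumber

section QWeyl

open TrivSqZeroExt

theorem QWeyl.F_mul_E : QWeyl.F * QWeyl.E = (1 + ε : ℚ[ε]) • (QWeyl.E * QWeyl.F) + 1 := by
  simpa only [map_add, map_mul, map_smul, map_one, QWeyl.E, QWeyl.F] using
    RingQuot.mkAlgHom_rel (DualNumber ℚ) QWeylRel.rel

theorem qNum_one_add_eps (n : ℕ) :
    qNum (1 + ε : ℚ[ε]) n = (n : ℚ[ε]) + ((n * (n - 1) / 2 : ℚ)) • (ε : ℚ[ε]) := by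
  induction n with
  | zero => simp
  | succ n ih =>
    rw [qNum_succ, ih, one_add_eps_pow]
    ext
    · simp
    · simp; ring

theorem qFact_eq_qFactorial (m : ℕ) : qFact m = qFactorial (1 + ε) m := by
  induction m with
  | zero => simp [qFact]
  | succ m ih =>
    rw [qFactorial_succ, ← ih, qNum_one_add_eps]
    ext
    · simp [qFact, Nat.factorial_succ]
    · simp [qFact, Nat.factorial_succ]; ring

theorem isUnit_qFact (m : ℕ) : IsUnit (qFact m) := by
  rw [isUnit_iff_isUnit_fst]
  simp [qFact, Nat.factorial_ne_zero]

end QWeyl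

/-- In the q-Weyl algebra over `ℚ[ε]/(ε²)` with `q = 1 + ε`:
`F^b E^a = ∑_j ([a]![b]!/([a-j]![j]![b-j]!)) E^{a-j} (1 + jε EF) F^{b-j}`. -/
theorem qweyl_normal_order (a b : ℕ) :
    QWeyl.F ^ b * QWeyl.E ^ a =
      ∑ j ∈ Finset.range (min a b + 1),
        algebraMap (DualNumber ℚ) QWeyl
            (qFact a * qFact b *
              Ring.inverse (qFact (a - j) * qFact j * qFact (b - j))) *
          (QWeyl.E ^ (a - j) *
            (1 + (j : QWeyl) * algebraMap (DualNumber ℚ) QWeyl ε *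
              (QWeyl.E * QWeyl.F)) *
            QWeyl.F ^ (b - j)) := by
  rw [pow_mul_pow_eq_sum_normalOrderCoeff (R := ℚ[ε]) QWeyl.F_mul_E,
    sum_normalOrderCoeff_one_add_eps (R := ℚ) (fun n m ↦ QWeyl.E ^ n * QWeyl.F ^ m)]
  refine sum_congr rfl fun j hj ↦ ?_
  have hj : j ≤ min a b := Nat.lt_succ_iff.1 (mem_range.1 hj)
  have hunit := ((isUnit_qFact (a - j)).mul (isUnit_qFact j)).mul (isUnit_qFact (b - j))
  simp only [qFact_eq_qFactorial] at hunit ⊢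
  rw [qFactorial_mul_qFactorial_mul_inverse _ (hj.trans (min_le_left a b))
      (hj.trans (min_le_right a b)) hunit, ← map_natCast (algebraMap ℚ[ε] QWeyl), ← map_mul,
    pow_mul_one_add_mul_mul_pow, Algebra.smul_def]
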